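/- arXiv:1603.08325 — 11 statements merged into one kernel-verified Lean document; each statement's English description precedes it below -/
import Mathlib

section
/- Let I1, I2, V1, V2 ∈ ℂ with I1+V1 ≠ 0 and I2+V2 ≠ 0, and let (Ī1,Ī2,V̄1,V̄2) = χ1(I1,I2,V1,V2). Then Ī1+Ī2+V̄1+V̄2 = I1+I2+V1+V2; that is, the quantity c1 = I1+I2+V1+V2 is a conserved quantity of the periodic discrete Toda lattice χ1 of type A^(1)_1. -/
/-! The update rescales `I2, V2` by `(I1 + V1) / (I2 + V2)` and `I1, V1` by its inverse, so
`Ī1 + V̄2 = I1 + V1` and `Ī2 + V̄1 = I2 + V2`. -/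

/-- The quantity `c₁ = I₁ + I₂ + V₁ + V₂` is a conserved quantity of the periodic
discrete Toda lattice `χ₁` of type `A₁⁽¹⁾`. -/
theorem toda_conserves_c1 (I1 I2 V1 V2 : ℂ)
    (h1 : I1 + V1 ≠ 0) (h2 : I2 + V2 ≠ 0)
    (I1' I2' V1' V2' : ℂ)
    (hI1' : I1' = (I1 + V1) / (I2 + V2) * I2)
    (hI2' : I2' = (I2 + V2) / (I1 + V1) * I1)
    (hV1' : V1' = (I2 + V2) / (I1 + V1) * V1)
    (hV2' : V2' = (I1 + V1) / (I2 + V2) * V2) :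
    I1' + I2' + V1' + V2' = I1 + I2 + V1 + V2 := by
  have h12 : I1' + V2' = I1 + V1 := by
    rw [hI1', hV2', ← mul_add, div_mul_cancel₀ _ h2]
  have h21 : I2' + V1' = I2 + V2 := by
    rw [hI2', hV1', ← mul_add, div_mul_cancel₀ _ h1]
  linear_combination h12 + h21
end

section
/- Let I1, I2, V1, V2 ∈ ℂ with I1+V1 ≠ 0 and I2+V2 ≠ 0, and let (Ī1,Ī2,V̄1,V̄2) = χ1(I1,I2,V1,V2). Then Ī1·Ī2 = I1·I2 and V̄1·V̄2 = V1·V2; consequently c0 = I1I2+V1V2, c−1 = I1I2V1V2, a = I1I2−V1V2 and b = −V1V2 are all conserved quantities of the periodic discrete Toda lattice χ1 of type A^(1)_1. -/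
theorem div_mul_mul_div_mul_mul {G : Type*} [CommGroupWithZero G] {a b : G}
    (ha : a ≠ 0) (hb : b ≠ 0) (x y : G) : a / b * x * (b / a * y) = x * y := by
  rw [mul_mul_mul_comm, div_mul_div_cancel₀ hb, div_self ha, one_mul]

/-- `Ī₁·Ī₂ = I₁·I₂` and `V̄₁·V̄₂ = V₁·V₂` under the periodic discrete Toda lattice
`χ₁` of type `A₁⁽¹⁾`; consequently `c₀ = I₁I₂ + V₁V₂`, `c₋₁ = I₁I₂V₁V₂`,
`a = I₁I₂ − V₁V₂` and `b = −V₁V₂` are all conserved quantities. -/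
theorem toda_conserves_c0_cm1_a_b (I1 I2 V1 V2 : ℂ)
    (h1 : I1 + V1 ≠ 0) (h2 : I2 + V2 ≠ 0)
    (I1' I2' V1' V2' : ℂ)
    (hI1' : I1' = (I1 + V1) / (I2 + V2) * I2)
    (hI2' : I2' = (I2 + V2) / (I1 + V1) * I1)
    (hV1' : V1' = (I2 + V2) / (I1 + V1) * V1)
    (hV2' : V2' = (I1 + V1) / (I2 + V2) * V2) :
    I1' * I2' = I1 * I2 ∧ V1' * V2' = V1 * V2 ∧
    I1' * I2' + V1' * V2' = I1 * I2 + V1 * V2 ∧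
    I1' * I2' * V1' * V2' = I1 * I2 * V1 * V2 ∧
    I1' * I2' - V1' * V2' = I1 * I2 - V1 * V2 ∧
    -(V1' * V2') = -(V1 * V2) := by
  have hI : I1' * I2' = I1 * I2 := by
    rw [hI1', hI2', div_mul_mul_div_mul_mul h1 h2, mul_comm]
  have hV : V1' * V2' = V1 * V2 := by
    rw [hV1', hV2', div_mul_mul_div_mul_mul h2 h1]
  refine ⟨hI, hV, by rw [hI, hV], ?_, by rw [hI, hV], by rw [hV]⟩
  rw [mul_assoc, hI, hV, ← mul_assoc]
end

section
/- Let I1, I2, V1, V2 ∈ ℂ with V2 ≠ 0, I1+V1 ≠ 0, I2+V2 ≠ 0, and set a = I1I2−V1V2, b = −V1V2, c1 = I1+I2+V1+V2. Then (i) the point Q̃ = (1/(V2(I1+V1)), 1/V2) satisfies b·x·y² + y² − b·c1·x²·y − c1·x·y + a·x² + x = 0, and (ii) if (Ī1,Ī2,V̄1,V̄2) = χ1(I1,I2,V1,V2), then 1/(V̄2(Ī2+V̄1)) = 1/(V2(I1+V1)) and 1/V̄2 = (I2+V2)/(V2(I1+V1)). In particular, the time evolution P̃ ↦ P̃' of the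 Toda lattice on the curve is realized by first moving along the horizontal line through P̃ = (1/(V2(I2+V1)), 1/V2) to Q̃, then along the vertical line through Q̃ to P̃' = (1/(V̄2(Ī2+V̄1)), 1/V̄2). -/
/-!
On `Q̃` the curve equation, multiplied by `(V₂(I₁+V₁))²`, becomes a polynomial identity once
`a`, `b`, `c₁` are written out. For the vertical move, the Toda map gives `Ī₂ + V̄₁ = I₂ + V₂` and multiplies
`V₂` by `(I₁+V₁)/(I₂+V₂)`, so `V̄₂(Ī₂+V̄₁) = V₂(I₁+V₁)`.
-/

section

variable {K : Type*} [Field K]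

/-- The left-hand side of the equation of `γ̃₁`. -/
def transformedSpectralCurve (a b c1 x y : K) : K :=
  b * x * y ^ 2 + y ^ 2 - b * c1 * x ^ 2 * y - c1 * x * y + a * x ^ 2 + x

theorem transformedSpectralCurve_switchPoint {I1 I2 V1 V2 : K} (hV2 : V2 ≠ 0)
    (h1 : I1 + V1 ≠ 0) :
    transformedSpectralCurve (I1 * I2 - V1 * V2) (-(V1 * V2)) (I1 + I2 + V1 + V2)
      (1 / (V2 * (I1 + V1))) (1 / V2) = 0 := by
  unfold transformedSpectralCurve
  field_simp
  ring

theorem toda_I2_add_V1 {I1 V1 : K} (t : K) (h1 : I1 + V1 ≠ 0) :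
    t / (I1 + V1) * I1 + t / (I1 + V1) * V1 = t := by
  rw [← mul_add, div_mul_cancel₀ _ h1]

theorem toda_V2_mul_I2_add_V1 {I1 I2 V1 V2 : K} (h1 : I1 + V1 ≠ 0) (h2 : I2 + V2 ≠ 0) :
    (I1 + V1) / (I2 + V2) * V2 * ((I2 + V2) / (I1 + V1) * I1 + (I2 + V2) / (I1 + V1) * V1)
      = V2 * (I1 + V1) := by
  rw [toda_I2_add_V1 _ h1]
  field_simp

theorem toda_one_div_V2 (s t V2 : K) : 1 / (s / t * V2) = t / (V2 * s) := by
  rw [one_div, mul_inv, inv_div]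
  ring

end

theorem toda_horizontal_vertical_switch_general (I1 I2 V1 V2 : ℂ)
    (hV2 : V2 ≠ 0) (h1 : I1 + V1 ≠ 0) (h2 : I2 + V2 ≠ 0)
    (a b c1 : ℂ)
    (ha : a = I1 * I2 - V1 * V2)
    (hb : b = -(V1 * V2))
    (hc1 : c1 = I1 + I2 + V1 + V2)
    (I2' V1' V2' : ℂ)
    (hI2' : I2' = (I2 + V2) / (I1 + V1) * I1)
    (hV1' : V1' = (I2 + V2) / (I1 + V1) * V1)
    (hV2' : V2' = (I1 + V1) / (I2 + V2) * V2) :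
    (b * (1 / (V2 * (I1 + V1))) * (1 / V2) ^ 2 + (1 / V2) ^ 2
      - b * c1 * (1 / (V2 * (I1 + V1))) ^ 2 * (1 / V2)
      - c1 * (1 / (V2 * (I1 + V1))) * (1 / V2)
      + a * (1 / (V2 * (I1 + V1))) ^ 2 + 1 / (V2 * (I1 + V1)) = 0)
    ∧ 1 / (V2' * (I2' + V1')) = 1 / (V2 * (I1 + V1))
    ∧ 1 / V2' = (I2 + V2) / (V2 * (I1 + V1)) := by
  subst ha hb hc1 hI2' hV1' hV2'
  exact ⟨transformedSpectralCurve_switchPoint hV2 h1,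
    by rw [toda_V2_mul_I2_add_V1 h1 h2], toda_one_div_V2 _ _ _⟩

/-- Geometric realization of the Toda time evolution on the transformed spectral
curve: (i) the point `Q̃ = (1/(V₂(I₁+V₁)), 1/V₂)` lies on the curve `γ̃₁`, and
(ii) the image point `P̃' = (1/(V̄₂(Ī₂+V̄₁)), 1/V̄₂)` has the same `x`-coordinate
as `Q̃` and `y`-coordinate `(I₂+V₂)/(V₂(I₁+V₁))`. -/
theorem toda_horizontal_vertical_switch (I1 I2 V1 V2 : ℂ)
    (hV2 : V2 ≠ 0) (h1 : I1 + V1 ≠ 0) (h2 : I2 + V2 ≠ 0)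
    (a b c1 : ℂ)
    (ha : a = I1 * I2 - V1 * V2)
    (hb : b = -(V1 * V2))
    (hc1 : c1 = I1 + I2 + V1 + V2)
    (I1' I2' V1' V2' : ℂ)
    (hI1' : I1' = (I1 + V1) / (I2 + V2) * I2)
    (hI2' : I2' = (I2 + V2) / (I1 + V1) * I1)
    (hV1' : V1' = (I2 + V2) / (I1 + V1) * V1)
    (hV2' : V2' = (I1 + V1) / (I2 + V2) * V2) :
    (b * (1 / (V2 * (I1 + V1))) * (1 / V2) ^ 2 + (1 / V2) ^ 2
      - b * c1 * (1 / (V2 * (I1 + V1))) ^ 2 * (1 / V2)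
      - c1 * (1 / (V2 * (I1 + V1))) * (1 / V2)
      + a * (1 / (V2 * (I1 + V1))) ^ 2 + 1 / (V2 * (I1 + V1)) = 0)
    ∧ 1 / (V2' * (I2' + V1')) = 1 / (V2 * (I1 + V1))
    ∧ 1 / V2' = (I2 + V2) / (V2 * (I1 + V1)) :=
  toda_horizontal_vertical_switch_general I1 I2 V1 V2 hV2 h1 h2 a b c1 ha hb hc1 I2' V1' V2' hI2'
    hV1' hV2'
end

section
/- Let a, b ∈ ℂ and let (x,y) ∈ ℂ² with x ≠ 0, y ≠ 0, b·x+1 ≠ 0; let (x̄,ȳ) = φ_TL(x,y) and assume x̄ ≠ 0, ȳ ≠ 0, b·x̄+1 ≠ 0 and that all denominators occurring in φ_TL are nonzero. Then λ(x̄,ȳ) = λ(x,y), where λ(x,y) = −(a−b)·x/((b·x+1)·y) − (b·x+1)·y/x + b·y − 1/y. Equivalently, setting λ = λ(x,y), both (x,y) and (x̄,ȳ) lie on the invariant curve b·x·y² + y² + b·λ·x²·y + λ·x·y + a·x² + x = 0 of the QRT map φ_TL. -/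
/-!
The invariant curve `C_λ(x, y) = 0` is quadratic in `x` and in `y` separately, and `φ_TL` is
the composition of the two switches that replace `x` (resp. `y`) by the other root of the
corresponding quadratic: the formula for `x̄` is Vieta's product `x x̄ (a + bλy) = y²` with
`λ = λ(x, y)` eliminated, and the formula for `ȳ` is Vieta's product `(b x̄ + 1) y ȳ = a x̄² + x̄`.
Each switch therefore keeps the point on `C_λ`, and away from `x y (b x + 1) = 0` the curve
`C_λ` is exactly the level set `λ(x, y) = λ`.
-/

theorem quadratic_eq_zero_of_mul_eq {R : Type*} [CommRing R] [NoZeroDivisors R]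
    {A B C t s : R} (ht : t ≠ 0) (hroot : A * t ^ 2 + B * t + C = 0) (hprod : A * t * s = C) :
    A * s ^ 2 + B * s + C = 0 := by
  have hsum : A * (t + s) + B = 0 := by
    refine (mul_eq_zero.mp ?_).resolve_left ht
    linear_combination hroot + hprod
  linear_combination s * hsum - hprod

section QRT

variable {K : Type*} [Field K]

def qrtCurve (a b lam x y : K) : K :=
  b * x * y ^ 2 + y ^ 2 + b * lam * x ^ 2 * y + lam * x * y + a * x ^ 2 + x

def qrtInvariant (a b x y : K) : K :=
  -(a - b) * x / ((b * x + 1) * y) - (b * x + 1) * y / x + b * y - 1 / y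

theorem qrtCurve_eq_zero_iff {a b lam x y : K} (hx : x ≠ 0) (hy : y ≠ 0) (hbx : b * x + 1 ≠ 0) :
    qrtCurve a b lam x y = 0 ↔ lam = qrtInvariant a b x y := by
  unfold qrtCurve qrtInvariant
  rw [eq_sub_iff_add_eq, eq_comm]
  field_simp
  constructor <;> intro h <;> linear_combination -h

theorem qrtCurve_horizontal_switch {a b lam x x' y : K} (hx : x ≠ 0)
    (hC : qrtCurve a b lam x y = 0) (hprod : x * x' * (a + b * lam * y) = y ^ 2) :
    qrtCurve a b lam x' y = 0 := by
  have key := quadratic_eq_zero_of_mul_eq (A := a + b * lam * y) (B := b * y ^ 2 + lam * y + 1)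
    (C := y ^ 2) (s := x') hx
    (by unfold qrtCurve at hC; linear_combination hC) (by linear_combination hprod)
  unfold qrtCurve
  linear_combination key

theorem qrtCurve_vertical_switch {a b lam x y y' : K} (hy : y ≠ 0)
    (hC : qrtCurve a b lam x y = 0) (hprod : (b * x + 1) * y * y' = a * x ^ 2 + x) :
    qrtCurve a b lam x y' = 0 := by
  have key := quadratic_eq_zero_of_mul_eq (A := b * x + 1) (B := lam * x * (b * x + 1))
    (C := a * x ^ 2 + x) hy
    (by unfold qrtCurve at hC; linear_combination hC) hprod
  unfold qrtCurve
  linear_combination key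

theorem mul_mul_add_qrtInvariant {a b x x' y : K} (hx : x ≠ 0) (hy : y ≠ 0) (hbx : b * x + 1 ≠ 0)
    (hx' : x' * (b * (b * x + 1) * y ^ 2 - (a - b) * x) = -((b * x + 1) * y ^ 2)) :
    x * x' * (a + b * qrtInvariant a b x y * y) = y ^ 2 := by
  have hA : (a + b * qrtInvariant a b x y * y) * (x * (b * x + 1)) =
      -(b * (b * x + 1) * y ^ 2 - (a - b) * x) := by
    unfold qrtInvariant
    field_simp
    ring
  refine mul_right_cancel₀ (mul_ne_zero hx hbx) ?_
  linear_combination x * x' * hA - x * hx'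

end QRT

/-- `λ(x,y) = −(a−b)x/((bx+1)y) − (bx+1)y/x + by − 1/y` is a conserved quantity of
the QRT map `φ_TL`, and with `λ = λ(x,y)` both `(x,y)` and its image `(x̄,ȳ)` lie
on the invariant curve `bxy² + y² + bλx²y + λxy + ax² + x = 0`. -/
theorem QRT_TL_conserved_quantity (a b x y x' y' lam : ℂ)
    (hx : x ≠ 0) (hy : y ≠ 0) (hbx : b * x + 1 ≠ 0)
    (hden1 : b * (b * x + 1) * y ^ 2 - (a - b) * x ≠ 0)
    (hx' : x' = -((b * x + 1) * y ^ 2) / (b * (b * x + 1) * y ^ 2 - (a - b) * x))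
    (hy' : y' = (a * x' ^ 2 + x') / ((b * x' + 1) * y))
    (hx'ne : x' ≠ 0) (hy'ne : y' ≠ 0) (hbx' : b * x' + 1 ≠ 0)
    (hlam : lam = -(a - b) * x / ((b * x + 1) * y) - (b * x + 1) * y / x + b * y - 1 / y) :
    (-(a - b) * x' / ((b * x' + 1) * y') - (b * x' + 1) * y' / x' + b * y' - 1 / y' = lam)
    ∧ (b * x * y ^ 2 + y ^ 2 + b * lam * x ^ 2 * y + lam * x * y + a * x ^ 2 + x = 0)
    ∧ (b * x' * y' ^ 2 + y' ^ 2 + b * lam * x' ^ 2 * y' + lam * x' * y' + a * x' ^ 2 + x' = 0) := by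
  have hlam : lam = qrtInvariant a b x y := hlam
  have hC : qrtCurve a b lam x y = 0 := (qrtCurve_eq_zero_iff hx hy hbx).2 hlam
  have hC' : qrtCurve a b lam x' y = 0 := qrtCurve_horizontal_switch hx hC <| by
    rw [hlam]
    exact mul_mul_add_qrtInvariant hx hy hbx (by rw [hx', div_mul_cancel₀ _ hden1])
  have hC'' : qrtCurve a b lam x' y' = 0 := qrtCurve_vertical_switch hy hC' <| by
    rw [hy']
    field_simp
  exact ⟨((qrtCurve_eq_zero_iff hx'ne hy'ne hbx').1 hC'').symm, hC, hC''⟩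
end

section
/- Let a, b ∈ ℂ and (x,y) ∈ ℂ² with x ≠ 0, y ≠ 0 and b·x+1 ≠ 0. Define I1 = (a−b)·x/((b·x+1)·y), I2 = (b·x+1)·y/x, V1 = −b·y, V2 = 1/y. Then I1·I2 − V1·V2 = a, −V1·V2 = b, 1/(V2·(I2+V1)) = x and 1/V2 = y. Hence the transformation (x,y) ↦ (I1,I2,V1,V2) is a right inverse of the map (I1,I2,V1,V2) ↦ (1/(V2(I2+V1)), 1/V2) that preserves the parameter values a = I1I2−V1V2 and b = −V1V2. -/
section TodaInverse

variable {K : Type*} [Field K] {a b x y : K}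

theorem toda_I₁_mul_I₂ (hx : x ≠ 0) (hy : y ≠ 0) (hbx : b * x + 1 ≠ 0) :
    (a - b) * x / ((b * x + 1) * y) * ((b * x + 1) * y / x) = a - b := by
  field_simp

theorem toda_I₂_add_V₁ (hx : x ≠ 0) :
    (b * x + 1) * y / x + -(b * y) = y / x := by
  field_simp
  ring

theorem toda_neg_V₁_mul_V₂ (hy : y ≠ 0) : -(-(b * y) * (1 / y)) = b := by
  field_simp

end TodaInverse

/-- The transformation `(x,y) ↦ (I₁,I₂,V₁,V₂)` given by
`I₁ = (a−b)x/((bx+1)y)`, `I₂ = (bx+1)y/x`, `V₁ = −by`, `V₂ = 1/y`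
is a right inverse of the eigenvector-type map
`(I₁,I₂,V₁,V₂) ↦ (1/(V₂(I₂+V₁)), 1/V₂)` preserving the parameters
`a = I₁I₂ − V₁V₂` and `b = −V₁V₂`. -/
theorem from_xy_to_IV_right_inverse (a b x y : ℂ)
    (hx : x ≠ 0) (hy : y ≠ 0) (hbx : b * x + 1 ≠ 0)
    (I1 I2 V1 V2 : ℂ)
    (hI1 : I1 = (a - b) * x / ((b * x + 1) * y))
    (hI2 : I2 = (b * x + 1) * y / x)
    (hV1 : V1 = -(b * y))
    (hV2 : V2 = 1 / y) :
    I1 * I2 - V1 * V2 = a ∧ -(V1 * V2) = b ∧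
    1 / (V2 * (I2 + V1)) = x ∧ 1 / V2 = y := by
  subst hI1 hI2 hV1 hV2
  refine ⟨?_, toda_neg_V₁_mul_V₂ hy, ?_, one_div_one_div y⟩
  · linear_combination toda_I₁_mul_I₂ (a := a) hx hy hbx + toda_neg_V₁_mul_V₂ (b := b) hy
  · rw [toda_I₂_add_V₁ hx]
    field_simp
end

section
/- Define sequences u_m, v_m ∈ ℤ² (exponent pairs of the principal coefficients y_{1;m}, y_{2;m} of the type A^(1)_1 cluster pattern in the tropical semifield Trop(y1,y2)) by u_0 = (1,0), v_0 = (0,1), and for each m ≥ 0: if m is even, u_{m+1} = −u_m and v_{m+1} = v_m + 2·min(u_m, (0,0)); if m is odd, u_{m+1} = u_m + 2·min(v_m, (0,0)) and v_{m+1} = −v_m, where min denotes componentwise minimum. Then for all m ≥ 2: if m is even, u_m = (−(m−1), −(m−2)) and v_m = (m−2, m−3); if m is odd, u_m = (m−2, m−3) and v_m = (−(m−1), −(m−2)). Equivalently, for m ≥ 2, y_{1;m} = y1^{−(m−1)} y2^{−(m−2)} and y_{2;m} = y1^{m−2} y2^{m−3} for m even, and y_{1;m} = y1^{m−2} y2^{m−3}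 and y_{2;m} = y1^{−(m−1)} y2^{−(m−2)} for m odd. -/
/-!
From `m = 2` on, the coefficient being mutated always has nonpositive exponents, so the
tropical sum `y ⊕ 1` is `y` itself and the recurrence becomes linear: the pair
(negative vector `n`, positive vector `p`) goes to `(p + 2n, -n)` with the roles of
`u` and `v` swapped, which shifts both closed forms by one.
-/

namespace A11

def negExp (m : ℕ) : ℤ × ℤ := (-((m : ℤ) - 1), -((m : ℤ) - 2))

def posExp (m : ℕ) : ℤ × ℤ := ((m : ℤ) - 2, (m : ℤ) - 3)

lemma neg_negExp (m : ℕ) : -negExp m = posExp (m + 1) := by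
  simp only [negExp, posExp, Prod.neg_mk, neg_neg, Prod.mk.injEq]
  push_cast
  constructor <;> ring

lemma posExp_add_two_mul_min_negExp {m : ℕ} (hm : 2 ≤ m) :
    posExp m + (2 * min (negExp m).1 0, 2 * min (negExp m).2 0) = negExp (m + 1) := by
  have hm' : (2 : ℤ) ≤ m := by exact_mod_cast hm
  have h1 : min (-((m : ℤ) - 1)) 0 = -((m : ℤ) - 1) := min_eq_left (by linarith)
  have h2 : min (-((m : ℤ) - 2)) 0 = -((m : ℤ) - 2) := min_eq_left (by linarith)
  simp only [negExp, posExp, h1, h2, Prod.mk_add_mk, Prod.mk.injEq]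
  push_cast
  constructor <;> ring

end A11

open A11 in
/-- The exponent pairs of the principal coefficients `y_{1;m}`, `y_{2;m}` of the
type `A₁⁽¹⁾` cluster pattern in the tropical semifield `Trop(y₁,y₂)`:
for `m ≥ 2` even, `y_{1;m} = y₁^{−(m−1)} y₂^{−(m−2)}` and `y_{2;m} = y₁^{m−2} y₂^{m−3}`,
and for `m ≥ 2` odd the two are swapped. -/
theorem principal_coefficients_A11 (u v : ℕ → ℤ × ℤ)
    (hu0 : u 0 = (1, 0)) (hv0 : v 0 = (0, 1))
    (hrec : ∀ m : ℕ,
      (Even m → u (m + 1) = -u m ∧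
        v (m + 1) = v m + (2 * min (u m).1 0, 2 * min (u m).2 0)) ∧
      (¬ Even m → u (m + 1) = u m + (2 * min (v m).1 0, 2 * min (v m).2 0) ∧
        v (m + 1) = -v m)) :
    ∀ m : ℕ, 2 ≤ m →
      (Even m → u m = (-((m : ℤ) - 1), -((m : ℤ) - 2)) ∧
        v m = ((m : ℤ) - 2, (m : ℤ) - 3)) ∧
      (¬ Even m → u m = ((m : ℤ) - 2, (m : ℤ) - 3) ∧
        v m = (-((m : ℤ) - 1), -((m : ℤ) - 2))) := by
  suffices H : ∀ m : ℕ, 2 ≤ m →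
      (Even m → u m = negExp m ∧ v m = posExp m) ∧
      (¬ Even m → u m = posExp m ∧ v m = negExp m) from H
  intro m hm
  induction m, hm using Nat.le_induction with
  | base =>
    obtain ⟨hu1, hv1⟩ := (hrec 0).1 Even.zero
    obtain ⟨hu2, hv2⟩ := (hrec 1).2 Nat.not_even_one
    refine ⟨fun _ => ⟨?_, ?_⟩, fun h => absurd even_two h⟩
    · rw [hu2, hu1, hv1, hu0, hv0]; decide
    · rw [hv2, hv1, hu0, hv0]; decide
  | succ n hn ih =>
    by_cases hn_even : Even n
    · obtain ⟨hun, hvn⟩ := ih.1 hn_even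
      obtain ⟨hu', hv'⟩ := (hrec n).1 hn_even
      refine ⟨fun h => absurd hn_even (Nat.even_add_one.mp h), fun _ => ⟨?_, ?_⟩⟩
      · rw [hu', hun, neg_negExp]
      · rw [hv', hvn, hun, posExp_add_two_mul_min_negExp hn]
    · obtain ⟨hun, hvn⟩ := ih.2 hn_even
      obtain ⟨hu', hv'⟩ := (hrec n).2 hn_even
      refine ⟨fun _ => ⟨?_, ?_⟩, fun h => absurd (Nat.even_add_one.mpr hn_even) h⟩
      · rw [hu', hun, hvn, posExp_add_two_mul_min_negExp hn]
      · rw [hv', hvn, neg_negExp]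
end

section
/- Let y1, y2, x1, x2 ∈ ℂ be nonzero, and let x_{1;m}, x_{2;m} (m ≥ 2, m even resp. as indicated) be determined by the type A^(1)_1 exchange relations: x_{1;2} = (y1·x2² + 1)/x1, x_{2;2} = (y2·(x_{1;2})² + 1)/x2, and for even m ≥ 2: x_{1;m+2} = ((x_{2;m})² + y1^{m−1}·y2^{m−2})/x_{1;m}, x_{2;m+2} = ((x_{1;m+2})² + y1^{m}·y2^{m−1})/x_{2;m}, assuming all terms are nonzero. Define z⁰ = x1/(y1·y2²), w⁰ = x2/y2, and for t ≥ 1, zᵗ = x_{1;2t}/(y1·y2)ᵗ and wᵗ = x_{2;2t}/(y1·y2)ᵗ. Then for every t ≥ 0, z^{t+1} = (y1·y2²·(wᵗ)² + 1)/(y1²·y2³·zᵗ) and w^{t+1} = (y1²·y2³·(z^{t+1})² + 1)/(y1·y2²·wᵗ). That is, the composition μ2∘μ1 of seed mutations in the cluster algebra of type A^(1)_1 with principal coefficients induces the QRT map φ_CA. -/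
/-!
Writing `a = z (y₁y₂)ᵗ` and `b = w (y₁y₂)ᵗ`, the QRT map `φ_CA` is the exchange step `μ₂ ∘ μ₁` at
`m = 2t` divided through by `(y₁y₂)ᵗ⁺¹`. With integer exponents, the relations defining `x_{1;2}`
and `x_{2;2}` are the case `m = 0` of the same step, with `x₁/(y₁y₂²)` and `x₂/y₂` playing
`x_{1;0}` and `x_{2;0}`, so a single computation covers every `t`.
-/

section ExchangeStep

variable {K : Type*} [Field K] {y1 y2 : K}

/-- The exchange relations of `μ₂ ∘ μ₁` from `(x_{1;m}, x_{2;m}) = (a, b)` to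
`(x_{1;m+2}, x_{2;m+2}) = (a', b')`. -/
def ExchangeStep (y1 y2 : K) (m : ℤ) (a b a' b' : K) : Prop :=
  a' = (b ^ 2 + y1 ^ (m - 1) * y2 ^ (m - 2)) / a ∧ b' = (a' ^ 2 + y1 ^ m * y2 ^ (m - 1)) / b

theorem exchangeStep_zero (hy1 : y1 ≠ 0) (hy2 : y2 ≠ 0) {x1 x2 a' b' : K}
    (ha' : a' = (y1 * x2 ^ 2 + 1) / x1) (hb' : b' = (y2 * a' ^ 2 + 1) / x2) :
    ExchangeStep y1 y2 0 (x1 / (y1 * y2 ^ 2)) (x2 / y2) a' b' := by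
  simp only [ExchangeStep, zero_sub, zpow_neg, zpow_ofNat]
  constructor
  · rw [ha']
    field_simp
  · rw [hb']
    field_simp

theorem exchangeStep_of_two_le {m : ℕ} (hm : 2 ≤ m) {a b a' b' : K}
    (ha' : a' = (b ^ 2 + y1 ^ (m - 1) * y2 ^ (m - 2)) / a)
    (hb' : b' = (a' ^ 2 + y1 ^ m * y2 ^ (m - 1)) / b) :
    ExchangeStep y1 y2 m a b a' b' := by
  have h1 : (m : ℤ) - 1 = ((m - 1 : ℕ) : ℤ) := by omega
  have h2 : (m : ℤ) - 2 = ((m - 2 : ℕ) : ℤ) := by omega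
  simpa only [ExchangeStep, h1, h2, zpow_natCast] using And.intro ha' hb'

theorem ExchangeStep.qrt_of_rescaled (hy1 : y1 ≠ 0) (hy2 : y2 ≠ 0) {t : ℤ} {z w z' w' : K}
    (h : ExchangeStep y1 y2 (2 * t) (z * (y1 * y2) ^ t) (w * (y1 * y2) ^ t)
      (z' * (y1 * y2) ^ (t + 1)) (w' * (y1 * y2) ^ (t + 1))) :
    z' = (y1 * y2 ^ 2 * w ^ 2 + 1) / (y1 ^ 2 * y2 ^ 3 * z) ∧
      w' = (y1 ^ 2 * y2 ^ 3 * z' ^ 2 + 1) / (y1 * y2 ^ 2 * w) := by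
  obtain ⟨hz', hw'⟩ := h
  set s := (y1 * y2) ^ t
  have hs : s ≠ 0 := zpow_ne_zero _ (mul_ne_zero hy1 hy2)
  have hsucc : (y1 * y2) ^ (t + 1) = s * (y1 * y2) := zpow_add_one₀ (mul_ne_zero hy1 hy2) t
  have hc1 : y1 ^ (2 * t - 1) * y2 ^ (2 * t - 2) = s ^ 2 / (y1 * y2 ^ 2) := by
    simp only [s, zpow_sub₀ hy1, zpow_sub₀ hy2, mul_comm (2 : ℤ), zpow_mul, mul_zpow]
    field_simp
  have hc2 : y1 ^ (2 * t) * y2 ^ (2 * t - 1) = s ^ 2 / y2 := by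
    simp only [s, zpow_sub₀ hy2, mul_comm (2 : ℤ), zpow_mul, mul_zpow]
    field_simp
  rw [hsucc, hc1] at hz'
  rw [hsucc, hc2] at hw'
  constructor
  · field_simp at hz' ⊢
    linear_combination hz'
  · field_simp at hw' ⊢
    linear_combination hw'

end ExchangeStep

theorem mutations_A11_induce_QRT_map_general (y1 y2 x1 x2 : ℂ)
    (hy1 : y1 ≠ 0) (hy2 : y2 ≠ 0)
    (X1 X2 : ℕ → ℂ)
    (hX12 : X1 2 = (y1 * x2 ^ 2 + 1) / x1)
    (hX22 : X2 2 = (y2 * (X1 2) ^ 2 + 1) / x2)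
    (hrec : ∀ m : ℕ, 2 ≤ m → Even m →
      X1 (m + 2) = ((X2 m) ^ 2 + y1 ^ (m - 1) * y2 ^ (m - 2)) / X1 m ∧
      X2 (m + 2) = ((X1 (m + 2)) ^ 2 + y1 ^ m * y2 ^ (m - 1)) / X2 m)
    (z w : ℕ → ℂ)
    (hz0 : z 0 = x1 / (y1 * y2 ^ 2)) (hw0 : w 0 = x2 / y2)
    (hz : ∀ t : ℕ, 1 ≤ t → z t = X1 (2 * t) / (y1 * y2) ^ t)
    (hw : ∀ t : ℕ, 1 ≤ t → w t = X2 (2 * t) / (y1 * y2) ^ t) :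
    ∀ t : ℕ,
      z (t + 1) = (y1 * y2 ^ 2 * (w t) ^ 2 + 1) / (y1 ^ 2 * y2 ^ 3 * z t) ∧
      w (t + 1) = (y1 ^ 2 * y2 ^ 3 * (z (t + 1)) ^ 2 + 1) / (y1 * y2 ^ 2 * w t) := by
  have hyy : ∀ n : ℕ, (y1 * y2) ^ n ≠ 0 := fun n ↦ pow_ne_zero n (mul_ne_zero hy1 hy2)
  have hZ : ∀ t : ℕ, 1 ≤ t → z t * (y1 * y2) ^ (t : ℤ) = X1 (2 * t) := fun t ht ↦ by
    rw [hz t ht, zpow_natCast, div_mul_cancel₀ _ (hyy t)]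
  have hW : ∀ t : ℕ, 1 ≤ t → w t * (y1 * y2) ^ (t : ℤ) = X2 (2 * t) := fun t ht ↦ by
    rw [hw t ht, zpow_natCast, div_mul_cancel₀ _ (hyy t)]
  intro t
  apply ExchangeStep.qrt_of_rescaled hy1 hy2 (t := t)
  rw [← Nat.cast_succ, hZ (t + 1) (by omega), hW (t + 1) (by omega)]
  rcases t with _ | k
  · simpa [hz0, hw0] using exchangeStep_zero hy1 hy2 hX12 hX22
  · have hm : 2 ≤ 2 * (k + 1) := by omega
    obtain ⟨hX1, hX2⟩ := hrec (2 * (k + 1)) hm (even_two_mul _)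
    rw [hZ (k + 1) (by omega), hW (k + 1) (by omega)]
    exact_mod_cast exchangeStep_of_two_le hm hX1 hX2

/-- The composition `μ₂ ∘ μ₁` of seed mutations in the cluster algebra of type
`A₁⁽¹⁾` with principal coefficients induces the QRT map `φ_CA`:
with `zᵗ = x_{1;2t}/(y₁y₂)ᵗ`, `wᵗ = x_{2;2t}/(y₁y₂)ᵗ` (and `z⁰ = x₁/(y₁y₂²)`,
`w⁰ = x₂/y₂`), one has `z^{t+1} = (y₁y₂²(wᵗ)² + 1)/(y₁²y₂³ zᵗ)` and
`w^{t+1} = (y₁²y₂³(z^{t+1})² + 1)/(y₁y₂² wᵗ)`. -/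
theorem mutations_A11_induce_QRT_map (y1 y2 x1 x2 : ℂ)
    (hy1 : y1 ≠ 0) (hy2 : y2 ≠ 0) (hx1 : x1 ≠ 0) (hx2 : x2 ≠ 0)
    (X1 X2 : ℕ → ℂ)
    (hX12 : X1 2 = (y1 * x2 ^ 2 + 1) / x1)
    (hX22 : X2 2 = (y2 * (X1 2) ^ 2 + 1) / x2)
    (hrec : ∀ m : ℕ, 2 ≤ m → Even m →
      X1 (m + 2) = ((X2 m) ^ 2 + y1 ^ (m - 1) * y2 ^ (m - 2)) / X1 m ∧
      X2 (m + 2) = ((X1 (m + 2)) ^ 2 + y1 ^ m * y2 ^ (m - 1)) / X2 m)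
    (hnz : ∀ m : ℕ, 2 ≤ m → Even m → X1 m ≠ 0 ∧ X2 m ≠ 0)
    (z w : ℕ → ℂ)
    (hz0 : z 0 = x1 / (y1 * y2 ^ 2)) (hw0 : w 0 = x2 / y2)
    (hz : ∀ t : ℕ, 1 ≤ t → z t = X1 (2 * t) / (y1 * y2) ^ t)
    (hw : ∀ t : ℕ, 1 ≤ t → w t = X2 (2 * t) / (y1 * y2) ^ t) :
    ∀ t : ℕ,
      z (t + 1) = (y1 * y2 ^ 2 * (w t) ^ 2 + 1) / (y1 ^ 2 * y2 ^ 3 * z t) ∧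
      w (t + 1) = (y1 ^ 2 * y2 ^ 3 * (z (t + 1)) ^ 2 + 1) / (y1 * y2 ^ 2 * w t) :=
  mutations_A11_induce_QRT_map_general y1 y2 x1 x2 hy1 hy2 X1 X2 hX12 hX22 hrec z w hz0 hw0 hz hw
end

section
/- Let y1, y2 ∈ ℂ be nonzero, let z, w ∈ ℂ be nonzero, let (z',w') = φ_CA(z,w), and assume z' ≠ 0 and w' ≠ 0. Then (y1·y2²·w'² + y1²·y2³·z'² + 1)/(z'·w') = (y1·y2²·w² + y1²·y2³·z² + 1)/(z·w); that is, λ(z,w) = −(y1·y2²·w² + y1²·y2³·z² + 1)/(z·w) is a conserved quantity of the QRT map φ_CA, and its invariant curve is y1·y2²·w² + λ·z·w + y1²·y2³·z² + 1 = 0. -/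
/-!
Each half-step of `φ_CA` is a Vieta involution on the biquadratic
`a w² + λ z w + b z² + 1 = 0` (here `a = y₁y₂²`, `b = y₁²y₂³`): for fixed `w` it is
quadratic in `z`, so its second root is `z' = (a w² + 1)/(b z)`, and likewise for `w` with
`z'` fixed. Hence `λ` is unchanged by each half-step.
-/

namespace QRT

variable {K : Type*} [Field K] {a b z z' w w' lam : K}

def invariant (a b z w : K) : K := (a * w ^ 2 + b * z ^ 2 + 1) / (z * w)

theorem invariant_swap (a b z w : K) : invariant a b z w = invariant b a w z := by
  unfold invariant
  ring

theorem invariant_eq_of_eq_div (hw : w ≠ 0) (hz' : z' ≠ 0)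
    (h : z' = (a * w ^ 2 + 1) / (b * z)) : invariant a b z' w = invariant a b z w := by
  have hbz : b * z ≠ 0 := (div_ne_zero_iff.mp (h ▸ hz')).2
  have hz : z ≠ 0 := right_ne_zero_of_mul hbz
  have vieta : z' * (b * z) = a * w ^ 2 + 1 := (eq_div_iff hbz).mp h
  unfold invariant
  rw [div_eq_div_iff (mul_ne_zero hz' hw) (mul_ne_zero hz hw)]
  linear_combination w * (z' - z) * vieta

theorem invariant_eq_of_eq_div' (hz : z ≠ 0) (hw' : w' ≠ 0)
    (h : w' = (b * z ^ 2 + 1) / (a * w)) : invariant a b z w' = invariant a b z w := by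
  rw [invariant_swap, invariant_swap a b z w]
  exact invariant_eq_of_eq_div hz hw' h

theorem curve_eq_zero_of_eq_neg_invariant (hz : z ≠ 0) (hw : w ≠ 0)
    (hlam : lam = -invariant a b z w) : a * w ^ 2 + lam * z * w + b * z ^ 2 + 1 = 0 := by
  rw [hlam, invariant]
  field_simp
  ring

end QRT

theorem QRT_CA_conserved_quantity_general (y1 y2 z w z' w' : ℂ)
    (hz : z ≠ 0) (hw : w ≠ 0)
    (hz' : z' = (y1 * y2 ^ 2 * w ^ 2 + 1) / (y1 ^ 2 * y2 ^ 3 * z))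
    (hw' : w' = (y1 ^ 2 * y2 ^ 3 * z' ^ 2 + 1) / (y1 * y2 ^ 2 * w))
    (hz'ne : z' ≠ 0) (hw'ne : w' ≠ 0) :
    ((y1 * y2 ^ 2 * w' ^ 2 + y1 ^ 2 * y2 ^ 3 * z' ^ 2 + 1) / (z' * w')
      = (y1 * y2 ^ 2 * w ^ 2 + y1 ^ 2 * y2 ^ 3 * z ^ 2 + 1) / (z * w))
    ∧ (∀ lam : ℂ, lam = -((y1 * y2 ^ 2 * w ^ 2 + y1 ^ 2 * y2 ^ 3 * z ^ 2 + 1) / (z * w)) →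
      y1 * y2 ^ 2 * w ^ 2 + lam * z * w + y1 ^ 2 * y2 ^ 3 * z ^ 2 + 1 = 0 ∧
      y1 * y2 ^ 2 * w' ^ 2 + lam * z' * w' + y1 ^ 2 * y2 ^ 3 * z' ^ 2 + 1 = 0) := by
  have conserved : QRT.invariant (y1 * y2 ^ 2) (y1 ^ 2 * y2 ^ 3) z' w'
      = QRT.invariant (y1 * y2 ^ 2) (y1 ^ 2 * y2 ^ 3) z w :=
    (QRT.invariant_eq_of_eq_div' hz'ne hw'ne hw').trans
      (QRT.invariant_eq_of_eq_div hw hz'ne hz')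
  refine ⟨conserved, fun lam hlam => ⟨?_, ?_⟩⟩
  · exact QRT.curve_eq_zero_of_eq_neg_invariant hz hw hlam
  · exact QRT.curve_eq_zero_of_eq_neg_invariant hz'ne hw'ne (conserved ▸ hlam)

/-- `λ(z,w) = −(y₁y₂²w² + y₁²y₂³z² + 1)/(zw)` is a conserved quantity of the QRT
map `φ_CA`, and its invariant curve is `y₁y₂²w² + λzw + y₁²y₂³z² + 1 = 0`. -/
theorem QRT_CA_conserved_quantity (y1 y2 z w z' w' : ℂ)
    (hy1 : y1 ≠ 0) (hy2 : y2 ≠ 0) (hz : z ≠ 0) (hw : w ≠ 0)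
    (hz' : z' = (y1 * y2 ^ 2 * w ^ 2 + 1) / (y1 ^ 2 * y2 ^ 3 * z))
    (hw' : w' = (y1 ^ 2 * y2 ^ 3 * z' ^ 2 + 1) / (y1 * y2 ^ 2 * w))
    (hz'ne : z' ≠ 0) (hw'ne : w' ≠ 0) :
    ((y1 * y2 ^ 2 * w' ^ 2 + y1 ^ 2 * y2 ^ 3 * z' ^ 2 + 1) / (z' * w')
      = (y1 * y2 ^ 2 * w ^ 2 + y1 ^ 2 * y2 ^ 3 * z ^ 2 + 1) / (z * w))
    ∧ (∀ lam : ℂ, lam = -((y1 * y2 ^ 2 * w ^ 2 + y1 ^ 2 * y2 ^ 3 * z ^ 2 + 1) / (z * w)) →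
      y1 * y2 ^ 2 * w ^ 2 + lam * z * w + y1 ^ 2 * y2 ^ 3 * z ^ 2 + 1 = 0 ∧
      y1 * y2 ^ 2 * w' ^ 2 + lam * z' * w' + y1 ^ 2 * y2 ^ 3 * z' ^ 2 + 1 = 0) :=
  QRT_CA_conserved_quantity_general y1 y2 z w z' w' hz hw hz' hw' hz'ne hw'ne
end

section
/- Let y1, y2, x1, x2 ∈ ℂ be nonzero and let x_{1;2t}, x_{2;2t} (t ≥ 1) be determined by the type A^(1)_1 exchange relations: x_{1;2} = (y1·x2² + 1)/x1, x_{2;2} = (y2·(x_{1;2})² + 1)/x2, and for even m ≥ 2: x_{1;m+2} = ((x_{2;m})² + y1^{m−1}·y2^{m−2})/x_{1;m}, x_{2;m+2} = ((x_{1;m+2})² + y1^{m}·y2^{m−1})/x_{2;m}, assuming all terms are nonzero. Then for every t ≥ 1, (y1·y2²·(x_{2;2t})² + y1²·y2³·(x_{1;2t})² + (y1·y2)^{2t}) / (x_{1;2t}·x_{2;2t}) = (y1·y2²·x1² + y1²·y2³·x2² + y1·y2³) / (x1·x2). In particular, this rational expression in the later cluster variables is independent of t and is a Laurent polynomial in the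 initial cluster variables x1, x2. -/
/-! Each round `μ₂ ∘ μ₁` of mutations preserves the rational function
`(y₁y₂²b² + y₁²y₂³a² + γ)/(ab)` of the cluster `(a, b)`, provided the coefficient term `γ`
is multiplied by `(y₁y₂)²` at the same time: after clearing denominators this is a polynomial
identity in the two exchange relations. Induction on `t` then carries the invariant back to the
initial cluster, where the first exchange `x_{1;2}x₁ = y₁x₂² + 1` has its coefficient on the
other side, so that there `a` and `b` trade places. -/

section

variable {K : Type*} [Field K]

def invariantA11 (y1 y2 γ a b : K) : K :=
  (y1 * y2 ^ 2 * b ^ 2 + y1 ^ 2 * y2 ^ 3 * a ^ 2 + γ) / (a * b)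

variable {y1 y2 a b c d : K}

theorem invariantA11_initial_mutation (ha : a ≠ 0) (hb : b ≠ 0) (hc : c ≠ 0) (hd : d ≠ 0)
    (hca : c * a = y1 * b ^ 2 + 1) (hdb : d * b = y2 * c ^ 2 + 1) :
    invariantA11 y1 y2 ((y1 * y2) ^ 2) c d = invariantA11 y1 y2 (y1 * y2 ^ 3) b a := by
  rw [invariantA11, invariantA11, div_eq_div_iff (mul_ne_zero hc hd) (mul_ne_zero hb ha)]
  linear_combination (y1 * y2 ^ 3 * c * d - y1 * y2 ^ 2 * a * d) * hca +
    (y1 * y2 ^ 2 * d * a - y1 ^ 2 * y2 ^ 2 * a * b) * hdb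

theorem invariantA11_mutation (P : K) (ha : a ≠ 0) (hb : b ≠ 0) (hc : c ≠ 0) (hd : d ≠ 0)
    (hca : c * a = b ^ 2 + P) (hdb : d * b = c ^ 2 + y1 * y2 * P) :
    invariantA11 y1 y2 ((y1 * y2) ^ 2 * (y1 * y2 ^ 2 * P)) c d
      = invariantA11 y1 y2 (y1 * y2 ^ 2 * P) a b := by
  rw [invariantA11, invariantA11, div_eq_div_iff (mul_ne_zero hc hd) (mul_ne_zero ha hb)]
  linear_combination (y1 * y2 ^ 2 * c * d - y1 ^ 2 * y2 ^ 3 * a * d) * hca +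
    (y1 * y2 ^ 2 * a * d - y1 ^ 2 * y2 ^ 3 * a * b) * hdb

end

theorem mutation_invariant_A11_general (y1 y2 x1 x2 : ℂ)
    (hx1 : x1 ≠ 0) (hx2 : x2 ≠ 0)
    (X1 X2 : ℕ → ℂ)
    (hX12 : X1 2 = (y1 * x2 ^ 2 + 1) / x1)
    (hX22 : X2 2 = (y2 * (X1 2) ^ 2 + 1) / x2)
    (hrec : ∀ m : ℕ, 2 ≤ m → Even m →
      X1 (m + 2) = ((X2 m) ^ 2 + y1 ^ (m - 1) * y2 ^ (m - 2)) / X1 m ∧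
      X2 (m + 2) = ((X1 (m + 2)) ^ 2 + y1 ^ m * y2 ^ (m - 1)) / X2 m)
    (hnz : ∀ m : ℕ, 2 ≤ m → Even m → X1 m ≠ 0 ∧ X2 m ≠ 0) :
    ∀ t : ℕ, 1 ≤ t →
      (y1 * y2 ^ 2 * (X2 (2 * t)) ^ 2 + y1 ^ 2 * y2 ^ 3 * (X1 (2 * t)) ^ 2
          + (y1 * y2) ^ (2 * t)) / (X1 (2 * t) * X2 (2 * t))
        = (y1 * y2 ^ 2 * x1 ^ 2 + y1 ^ 2 * y2 ^ 3 * x2 ^ 2 + y1 * y2 ^ 3) / (x1 * x2) := by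
  intro t ht
  induction t, ht using Nat.le_induction with
  | base =>
    obtain ⟨h2a, h2b⟩ := hnz 2 le_rfl even_two
    rw [mul_comm x1 x2]
    exact invariantA11_initial_mutation hx1 hx2 h2a h2b
      ((eq_div_iff hx1).mp hX12) ((eq_div_iff hx2).mp hX22)
  | succ t ht ih =>
    obtain ⟨k, rfl⟩ := Nat.exists_eq_add_of_le' ht
    have hm : 2 ≤ 2 * (k + 1) := by omega
    have hev : Even (2 * (k + 1)) := even_two_mul _
    obtain ⟨ha, hb⟩ := hnz _ hm hev
    obtain ⟨hc, hd⟩ := hnz (2 * (k + 1) + 2) (by omega) (hev.add even_two)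
    obtain ⟨hca, hdb⟩ := hrec _ hm hev
    rw [show 2 * (k + 1) - 1 = 2 * k + 1 by omega, show 2 * (k + 1) - 2 = 2 * k by omega] at hca
    rw [show 2 * (k + 1) - 1 = 2 * k + 1 by omega] at hdb
    set P := y1 ^ (2 * k + 1) * y2 ^ (2 * k)
    refine Eq.trans ?_ ih
    change invariantA11 y1 y2 ((y1 * y2) ^ (2 * (k + 1) + 2)) (X1 (2 * (k + 1) + 2))
        (X2 (2 * (k + 1) + 2))
      = invariantA11 y1 y2 ((y1 * y2) ^ (2 * (k + 1))) (X1 (2 * (k + 1))) (X2 (2 * (k + 1)))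
    rw [show (y1 * y2) ^ (2 * (k + 1) + 2) = (y1 * y2) ^ 2 * (y1 * y2 ^ 2 * P) by ring,
      show (y1 * y2) ^ (2 * (k + 1)) = y1 * y2 ^ 2 * P by ring]
    exact invariantA11_mutation P ha hb hc hd ((eq_div_iff ha).mp hca)
      (by rw [(eq_div_iff hb).mp hdb]; ring)

/-- Laurent-phenomenon invariant of the seed mutations in the cluster algebra of
type `A₁⁽¹⁾`: for every `t ≥ 1`,
`(y₁y₂²x_{2;2t}² + y₁²y₂³x_{1;2t}² + (y₁y₂)^{2t})/(x_{1;2t}x_{2;2t})`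
equals the Laurent polynomial `(y₁y₂²x₁² + y₁²y₂³x₂² + y₁y₂³)/(x₁x₂)` in the
initial cluster variables. -/
theorem mutation_invariant_A11 (y1 y2 x1 x2 : ℂ)
    (hy1 : y1 ≠ 0) (hy2 : y2 ≠ 0) (hx1 : x1 ≠ 0) (hx2 : x2 ≠ 0)
    (X1 X2 : ℕ → ℂ)
    (hX12 : X1 2 = (y1 * x2 ^ 2 + 1) / x1)
    (hX22 : X2 2 = (y2 * (X1 2) ^ 2 + 1) / x2)
    (hrec : ∀ m : ℕ, 2 ≤ m → Even m →
      X1 (m + 2) = ((X2 m) ^ 2 + y1 ^ (m - 1) * y2 ^ (m - 2)) / X1 m ∧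
      X2 (m + 2) = ((X1 (m + 2)) ^ 2 + y1 ^ m * y2 ^ (m - 1)) / X2 m)
    (hnz : ∀ m : ℕ, 2 ≤ m → Even m → X1 m ≠ 0 ∧ X2 m ≠ 0) :
    ∀ t : ℕ, 1 ≤ t →
      (y1 * y2 ^ 2 * (X2 (2 * t)) ^ 2 + y1 ^ 2 * y2 ^ 3 * (X1 (2 * t)) ^ 2
          + (y1 * y2) ^ (2 * t)) / (X1 (2 * t) * X2 (2 * t))
        = (y1 * y2 ^ 2 * x1 ^ 2 + y1 ^ 2 * y2 ^ 3 * x2 ^ 2 + y1 * y2 ^ 3) / (x1 * x2) :=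
  mutation_invariant_A11_general y1 y2 x1 x2 hx1 hx2 X1 X2 hX12 hX22 hrec hnz
end

section
/- Let a, ξ, η ∈ ℂ with a ≠ 0 and ξ ≠ 0. Let (x^{⟨m⟩}, y^{⟨m⟩}) denote the m-th iterate of the map φ_TL^{b=0} starting from (ξ,η), where φ_TL^{b=0}(x,y) = (x',y') with x' = y²/(a·x) and y' = (a·x'² + x')/y; and let (x^{(n)}, y^{(n)}) denote the n-th iterate of the map φ_CA^{ξ} starting from (ξ,η), where φ_CA^{ξ}(z,w) = (z',w') with z' = (w²+ξ)/(a·z) and w' = (a·z'² + ξ)/w (this is the QRT map φ_CA with parameters y1 = a²ξ and y2 = 1/(aξ)). Assume all denominators occurring along both orbits are nonzero. Then for every n ≥ 0: ξ·x^{⟨2n⟩} = (x^{(n)})² and ξ·y^{⟨2n⟩} = x^{(n)}·y^{(n)}; that is, ξ·φ_TL^{2n}(ξ,η) = x^{(n)}·φ_CA^{n}(ξ,η). -/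
/-!
The map `(z, w) ↦ (z² / ξ, z w / ξ)` semi-conjugates the square of the Toda map to the
cluster map on points with nonzero coordinates. Halfway, the Toda orbit passes through
`(w² / (a ξ), w z' / ξ)`, where `z'` is the first coordinate of the cluster image of `(z, w)`.
-/

variable {K : Type*} [Field K]

namespace QRT

def todaMap (a : K) (p : K × K) : K × K :=
  let x := p.2 ^ 2 / (a * p.1)
  (x, (a * x ^ 2 + x) / p.2)

def clusterMap (a ξ : K) (p : K × K) : K × K :=
  let z := (p.2 ^ 2 + ξ) / (a * p.1)
  (z, (a * z ^ 2 + ξ) / p.2)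

def squareLift (ξ : K) (p : K × K) : K × K :=
  (p.1 ^ 2 / ξ, p.1 * p.2 / ξ)

variable {a ξ : K}

theorem todaMap_squareLift (ha : a ≠ 0) (hξ : ξ ≠ 0) {z w : K} (hz : z ≠ 0) (hw : w ≠ 0) :
    todaMap a (squareLift ξ (z, w)) =
      (w ^ 2 / (a * ξ), w * (clusterMap a ξ (z, w)).1 / ξ) := by
  simp only [todaMap, squareLift, clusterMap, Prod.mk.injEq]
  constructor <;> field_simp

theorem todaMap_eq_squareLift (ha : a ≠ 0) (hξ : ξ ≠ 0) {z w : K} (hw : w ≠ 0) :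
    todaMap a (w ^ 2 / (a * ξ), w * z / ξ) = squareLift ξ (z, (a * z ^ 2 + ξ) / w) := by
  simp only [todaMap, squareLift, Prod.mk.injEq]
  constructor <;> field_simp

theorem todaMap_todaMap_squareLift (ha : a ≠ 0) (hξ : ξ ≠ 0) {p : K × K} (hz : p.1 ≠ 0)
    (hw : p.2 ≠ 0) :
    todaMap a (todaMap a (squareLift ξ p)) = squareLift ξ (clusterMap a ξ p) := by
  rw [todaMap_squareLift ha hξ hz hw, todaMap_eq_squareLift ha hξ hw]
  rfl

end QRT

open QRT in
theorem QRT_TL_vs_QRT_CA_general (a xi eta : ℂ) (ha : a ≠ 0) (hxi : xi ≠ 0)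
    (X Y Z W : ℕ → ℂ)
    (hX0 : X 0 = xi) (hY0 : Y 0 = eta)
    (hXY : ∀ m : ℕ, X (m + 1) = (Y m) ^ 2 / (a * X m) ∧
      Y (m + 1) = (a * (X (m + 1)) ^ 2 + X (m + 1)) / Y m)
    (hZ0 : Z 0 = xi) (hW0 : W 0 = eta)
    (hZW : ∀ n : ℕ, Z (n + 1) = ((W n) ^ 2 + xi) / (a * Z n) ∧
      W (n + 1) = (a * (Z (n + 1)) ^ 2 + xi) / W n)
    (hZWnz : ∀ n : ℕ, Z n ≠ 0 ∧ W n ≠ 0) :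
    ∀ n : ℕ, xi * X (2 * n) = (Z n) ^ 2 ∧ xi * Y (2 * n) = Z n * W n := by
  have toda_step (m : ℕ) : (X (m + 1), Y (m + 1)) = todaMap a (X m, Y m) := by
    simp only [todaMap, (hXY m).1, (hXY m).2]
  have cluster_step (n : ℕ) : (Z (n + 1), W (n + 1)) = clusterMap a xi (Z n, W n) := by
    simp only [clusterMap, (hZW n).1, (hZW n).2]
  have lift (n : ℕ) : (X (2 * n), Y (2 * n)) = squareLift xi (Z n, W n) := by
    induction n with
    | zero => simp [squareLift, hX0, hY0, hZ0, hW0, sq, hxi]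
    | succ n ih =>
      rw [show 2 * (n + 1) = 2 * n + 1 + 1 by ring, toda_step, toda_step, ih,
        todaMap_todaMap_squareLift ha hxi (hZWnz n).1 (hZWnz n).2, cluster_step]
  intro n
  obtain ⟨hX, hY⟩ := Prod.mk.inj (lift n)
  exact ⟨by rw [hX, mul_div_cancel₀ _ hxi], by rw [hY, mul_div_cancel₀ _ hxi]⟩

/-- Main theorem relating the two QRT maps: with `b = 0`, `y₁ = a²ξ`, `y₂ = 1/(aξ)`,
one has `ξ·φ_TL^{2n}(ξ,η) = x⁽ⁿ⁾·φ_CA^{n}(ξ,η)` for all `n ≥ 0`, i.e.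
`ξ·x^{⟨2n⟩} = (x⁽ⁿ⁾)²` and `ξ·y^{⟨2n⟩} = x⁽ⁿ⁾·y⁽ⁿ⁾`. -/
theorem QRT_TL_vs_QRT_CA (a xi eta : ℂ) (ha : a ≠ 0) (hxi : xi ≠ 0)
    (X Y Z W : ℕ → ℂ)
    (hX0 : X 0 = xi) (hY0 : Y 0 = eta)
    (hXY : ∀ m : ℕ, X (m + 1) = (Y m) ^ 2 / (a * X m) ∧
      Y (m + 1) = (a * (X (m + 1)) ^ 2 + X (m + 1)) / Y m)
    (hZ0 : Z 0 = xi) (hW0 : W 0 = eta)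
    (hZW : ∀ n : ℕ, Z (n + 1) = ((W n) ^ 2 + xi) / (a * Z n) ∧
      W (n + 1) = (a * (Z (n + 1)) ^ 2 + xi) / W n)
    (hXYnz : ∀ m : ℕ, X m ≠ 0 ∧ Y m ≠ 0)
    (hZWnz : ∀ n : ℕ, Z n ≠ 0 ∧ W n ≠ 0) :
    ∀ n : ℕ, xi * X (2 * n) = (Z n) ^ 2 ∧ xi * Y (2 * n) = Z n * W n :=
  QRT_TL_vs_QRT_CA_general a xi eta ha hxi X Y Z W hX0 hY0 hXY hZ0 hW0 hZW hZWnz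
end

section
/- Let z, w ∈ ℂ be nonzero, let (z',w') = φ_{A2}(z,w) with z' = (w+1)/z and w' = (z'+1)/w, and assume z' ≠ 0 and w' ≠ 0. Then ((z'+1)·w'² + (z'²+2)·w' + (z'+1)²)/(z'·w') = ((z+1)·w² + (z²+2)·w + (z+1)²)/(z·w); that is, λ(z,w) = −((z+1)·w² + (z²+2)·w + (z+1)²)/(z·w) is a conserved quantity of φ_{A2}, and its invariant curve is the cubic (z+1)·w² + (z² + λ·z + 2)·w + (z+1)² = 0. -/
/-!
The numerator `P(z,w) = (z+1)w² + (z²+2)w + (z+1)²` is symmetric in `z` and `w`, and for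
fixed `w` the function `P(z,w)/(zw) = ((w+1)z + w² + 2 + (w+1)²/z)/w` is unchanged by `z ↦ (w+1)/z`.
So `P/(zw)` is invariant under both involutions whose composition is `φ_{A₂}`.
-/

namespace QRTA2

variable {K : Type*} [Field K]

def curvePoly (z w : K) : K := (z + 1) * w ^ 2 + (z ^ 2 + 2) * w + (z + 1) ^ 2

def invariant (z w : K) : K := curvePoly z w / (z * w)

theorem curvePoly_comm (z w : K) : curvePoly z w = curvePoly w z := by
  unfold curvePoly; ring

theorem invariant_comm (z w : K) : invariant z w = invariant w z := by
  rw [invariant, invariant, curvePoly_comm, mul_comm]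

theorem invariant_eq_of_mul_eq {x x' y : K} (hx : x ≠ 0) (hx' : x' ≠ 0) (hy : y ≠ 0)
    (h : x * x' = y + 1) : invariant x' y = invariant x y := by
  rw [invariant, invariant, div_eq_div_iff (mul_ne_zero hx' hy) (mul_ne_zero hx hy), curvePoly,
    curvePoly]
  linear_combination y * (y + 1) * (x' - x) * h

theorem curve_eq_zero_of_eq_neg_invariant {z w lam : K} (hz : z ≠ 0) (hw : w ≠ 0)
    (hlam : lam = -invariant z w) :
    (z + 1) * w ^ 2 + (z ^ 2 + lam * z + 2) * w + (z + 1) ^ 2 = 0 := by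
  rw [hlam, invariant, curvePoly]
  field_simp
  ring

end QRTA2

open QRTA2 in
/-- `λ(z,w) = −((z+1)w² + (z²+2)w + (z+1)²)/(zw)` is a conserved quantity of the
QRT map `φ_{A₂} : (z,w) ↦ ((w+1)/z, (z'+1)/w)`, with invariant cubic curve
`(z+1)w² + (z² + λz + 2)w + (z+1)² = 0`. -/
theorem QRT_A2_conserved_quantity (z w z' w' : ℂ)
    (hz : z ≠ 0) (hw : w ≠ 0)
    (hz' : z' = (w + 1) / z) (hw' : w' = (z' + 1) / w)
    (hz'ne : z' ≠ 0) (hw'ne : w' ≠ 0) :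
    (((z' + 1) * w' ^ 2 + (z' ^ 2 + 2) * w' + (z' + 1) ^ 2) / (z' * w')
      = ((z + 1) * w ^ 2 + (z ^ 2 + 2) * w + (z + 1) ^ 2) / (z * w))
    ∧ (∀ lam : ℂ, lam = -(((z + 1) * w ^ 2 + (z ^ 2 + 2) * w + (z + 1) ^ 2) / (z * w)) →
        (z + 1) * w ^ 2 + (z ^ 2 + lam * z + 2) * w + (z + 1) ^ 2 = 0 ∧
        (z' + 1) * w' ^ 2 + (z' ^ 2 + lam * z' + 2) * w' + (z' + 1) ^ 2 = 0) := by
  have hzz' : z * z' = w + 1 := by rw [hz']; field_simp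
  have hww' : w * w' = z' + 1 := by rw [hw']; field_simp
  have h_conserved : invariant z' w' = invariant z w :=
    calc invariant z' w' = invariant w' z' := invariant_comm z' w'
      _ = invariant w z' := invariant_eq_of_mul_eq hw hw'ne hz'ne hww'
      _ = invariant z' w := invariant_comm w z'
      _ = invariant z w := invariant_eq_of_mul_eq hz hz'ne hw hzz'
  refine ⟨h_conserved, fun lam hlam => ⟨curve_eq_zero_of_eq_neg_invariant hz hw hlam, ?_⟩⟩
  exact curve_eq_zero_of_eq_neg_invariant hz'ne hw'ne
    (hlam.trans (congrArg Neg.neg h_conserved.symm))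
end
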